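/- arXiv:1611.00581 — 5 statements merged into one kernel-verified Lean document; each statement's English description precedes it below -/
import Mathlib

section
/- For any n ≥ 1, the n×n matrix with entries 1/(2n − m − j + 1), 1 ≤ m,j ≤ n, is symmetric positive definite. -/
set_option maxHeartbeats 1000000

open Matrix intervalIntegral

theorem stmt_3 (n : ℕ) (hn : 1 ≤ n) :
    (Matrix.of fun m j : Fin n =>
      1 / ((2 * n : ℝ) - (m.1 + 1) - (j.1 + 1) + 1)).PosDef := by
  set e : Fin n → ℕ := fun m => n - 1 - m.1 with he
  have hcast : ∀ m : Fin n, (e m : ℝ) = (n : ℝ) - 1 - m.1 := by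
    intro m
    have h1 : m.1 ≤ n - 1 := by omega
    have h2 : (1 : ℕ) ≤ n := hn
    push_cast [he, Nat.cast_sub h1, Nat.cast_sub h2]
    ring
  have hentry : ∀ m j : Fin n,
      (1 : ℝ) / ((2 * n : ℝ) - (m.1 + 1) - (j.1 + 1) + 1)
        = ∫ t in (0:ℝ)..1, t ^ (e m + e j) := by
    intro m j
    rw [integral_pow]
    have : ((e m + e j : ℕ) : ℝ) + 1 = (2 * n : ℝ) - (m.1 + 1) - (j.1 + 1) + 1 := by
      push_cast [hcast m, hcast j]
      ring
    rw [this]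
    simp
  have hcont : ∀ (c d : ℝ) (k : ℕ), Continuous fun t : ℝ => c * t ^ k * d :=
    fun c d k => (continuous_const.mul (continuous_pow k)).mul continuous_const
  rw [Matrix.posDef_iff_dotProduct_mulVec]
  constructor
  · ext m j
    simp only [Matrix.conjTranspose_apply, Matrix.of_apply, star_trivial]
    ring_nf
  · intro x hx
    have key : dotProduct (star x) ((Matrix.of fun m j : Fin n =>
        1 / ((2 * n : ℝ) - (m.1 + 1) - (j.1 + 1) + 1)) *ᵥ x)
        = ∫ t in (0:ℝ)..1, (∑ m : Fin n, x m * t ^ (e m)) ^ 2 := by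
      have expand : ∀ t : ℝ, (∑ m : Fin n, x m * t ^ (e m)) ^ 2
          = ∑ m : Fin n, ∑ j : Fin n, x m * t ^ (e m + e j) * x j := by
        intro t
        rw [sq, Finset.sum_mul_sum]
        congr 1; ext m; congr 1; ext j
        rw [pow_add]; ring
      have h1 : (∫ t in (0:ℝ)..1, ∑ m : Fin n, ∑ j : Fin n, x m * t ^ (e m + e j) * x j)
          = ∑ m : Fin n, ∫ t in (0:ℝ)..1, ∑ j : Fin n, x m * t ^ (e m + e j) * x j :=
        integral_finset_sum (μ := MeasureTheory.volume)
          (f := fun m t => ∑ j : Fin n, x m * t ^ (e m + e j) * x j)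
          (fun m _ => (continuous_finset_sum Finset.univ
            (fun j _ => hcont (x m) (x j) (e m + e j))).intervalIntegrable _ _)
      have h2 : ∀ m : Fin n, (∫ t in (0:ℝ)..1, ∑ j : Fin n, x m * t ^ (e m + e j) * x j)
          = ∑ j : Fin n, ∫ t in (0:ℝ)..1, x m * t ^ (e m + e j) * x j :=
        fun m => integral_finset_sum (μ := MeasureTheory.volume)
          (f := fun j t => x m * t ^ (e m + e j) * x j)
          (fun j _ => (hcont (x m) (x j) (e m + e j)).intervalIntegrable _ _)
      simp only [intervalIntegral.integral_congr (g := fun t =>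
        ∑ m : Fin n, ∑ j : Fin n, x m * t ^ (e m + e j) * x j)
        (fun t _ => expand t), h1, h2]
      simp only [dotProduct, mulVec, Matrix.of_apply, Pi.star_apply, star_trivial]
      refine Finset.sum_congr rfl fun m _ => ?_
      rw [Finset.mul_sum]
      refine Finset.sum_congr rfl fun j _ => ?_
      rw [hentry m j, ← intervalIntegral.integral_mul_const,
        ← intervalIntegral.integral_const_mul]
      exact intervalIntegral.integral_congr fun t _ => by ring
    rw [key]
    set p : Polynomial ℝ := ∑ m : Fin n, Polynomial.C (x m) * Polynomial.X ^ (e m) with hp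
    obtain ⟨m₀, hm₀⟩ : ∃ m, x m ≠ 0 := Function.ne_iff.mp hx
    have hinj : ∀ m : Fin n, e m₀ = e m → m = m₀ := by
      intro m hm
      have := m.2; have := m₀.2
      ext; simp only [he] at hm; omega
    have hpne : p ≠ 0 := by
      intro h
      have hc : p.coeff (e m₀) = x m₀ := by
        rw [hp, Polynomial.finset_sum_coeff]
        rw [Finset.sum_eq_single m₀]
        · simp
        · intro m _ hm
          rw [Polynomial.coeff_C_mul, Polynomial.coeff_X_pow, if_neg, mul_zero]
          exact fun hh => hm (hinj m hh)
        · simp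
      rw [h] at hc
      simp at hc
      exact hm₀ hc.symm
    have heval : ∀ t : ℝ, p.eval t = ∑ m : Fin n, x m * t ^ (e m) := by
      intro t; simp [hp, Polynomial.eval_finset_sum]
    obtain ⟨c, hc01, hcne⟩ : ∃ c ∈ Set.Icc (0:ℝ) 1, p.eval c ≠ 0 := by
      have hfin : {t : ℝ | p.IsRoot t}.Finite := by
        apply Set.Finite.subset p.roots.toFinset.finite_toSet
        intro t ht
        rw [Finset.mem_coe, Multiset.mem_toFinset, Polynomial.mem_roots hpne]
        exact ht
      have hinf : (Set.Icc (0:ℝ) 1).Infinite := Set.Icc_infinite (by norm_num)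
      obtain ⟨c, hc⟩ := (hinf.diff hfin).nonempty
      exact ⟨c, hc.1, hc.2⟩
    have hgc : Continuous fun t : ℝ => (∑ m : Fin n, x m * t ^ (e m)) ^ 2 := by
      apply Continuous.pow
      exact continuous_finset_sum _ fun m _ => continuous_const.mul (continuous_pow _)
    have hlt := intervalIntegral.integral_lt_integral_of_continuousOn_of_le_of_exists_lt
      (f := fun _ => (0:ℝ)) (g := fun t => (∑ m : Fin n, x m * t ^ (e m)) ^ 2)
      (a := 0) (b := 1) (by norm_num) continuousOn_const
      hgc.continuousOn (fun t _ => sq_nonneg _)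
      ⟨c, hc01, by
        show (0:ℝ) < (∑ m : Fin n, x m * c ^ (e m)) ^ 2
        rw [← heval]
        positivity⟩
    simpa using hlt
end

section
/- For any n ≥ 1, the n×n matrix M with entries M_{m,j} = 1/((2n−m−j+1)(2n−m−j+2)) is symmetric positive definite, and in particular invertible. -/
open Matrix intervalIntegral Polynomial

theorem momInt (k : ℕ) : ∫ t in (0:ℝ)..1, t ^ k * (1 - t) = 1 / ((k+1)*(k+2)) := by
  have h : ∀ t : ℝ, t ^ k * (1 - t) = t ^ k - t ^ (k+1) := by intro t; ring
  simp_rw [h]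
  rw [integral_sub ((continuous_pow k).intervalIntegrable 0 1)
    ((continuous_pow (k+1)).intervalIntegrable 0 1), integral_pow, integral_pow]
  have h1 : (k:ℝ) + 1 ≠ 0 := by positivity
  push_cast
  rw [one_pow, one_pow, zero_pow (by omega), zero_pow (by omega),
    div_sub_div _ _ h1 (by positivity : (k:ℝ)+1+1 ≠ 0)]
  rw [div_eq_div_iff (by positivity) (by positivity)]
  ring

theorem subint {f : ℝ → ℝ} (hf : Continuous f) (hnn : ∀ t ∈ Set.Icc (0:ℝ) 1, 0 ≤ f t)
    {c d : ℝ} (h0c : 0 ≤ c) (hcd : c ≤ d) (hd1 : d ≤ 1) :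
    (∫ t in c..d, f t) ≤ ∫ t in (0:ℝ)..1, f t := by
  have i1 : IntervalIntegrable f MeasureTheory.volume 0 c := hf.intervalIntegrable _ _
  have i2 : IntervalIntegrable f MeasureTheory.volume c d := hf.intervalIntegrable _ _
  have i3 : IntervalIntegrable f MeasureTheory.volume d 1 := hf.intervalIntegrable _ _
  have e : (∫ t in (0:ℝ)..1, f t) = (∫ t in (0:ℝ)..c, f t) + (∫ t in c..d, f t)
      + (∫ t in d..(1:ℝ), f t) := by
    rw [integral_add_adjacent_intervals i1 i2, integral_add_adjacent_intervals
      (i1.trans i2) i3]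
  rw [e]
  have n1 : 0 ≤ ∫ t in (0:ℝ)..c, f t :=
    integral_nonneg h0c (fun t ht => hnn t ⟨ht.1, ht.2.trans (hcd.trans hd1)⟩)
  have n3 : 0 ≤ ∫ t in d..(1:ℝ), f t :=
    integral_nonneg hd1 (fun t ht => hnn t ⟨(h0c.trans hcd).trans ht.1, ht.2⟩)
  linarith

theorem stmt_5 (n : ℕ) (hn : 1 ≤ n)
    (M : Matrix (Fin n) (Fin n) ℝ)
    (hM : ∀ m j : Fin n, M m j =
      1 / (((2 * n : ℝ) - (m.1 + 1) - (j.1 + 1) + 1) * ((2 * n : ℝ) - (m.1 + 1) - (j.1 + 1) + 2))) :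
    M.PosDef ∧ IsUnit M.det := by
  have hpd : M.PosDef := by
    refine posDef_iff_dotProduct_mulVec.mpr ⟨?_, ?_⟩
    · ext i j
      simp only [conjTranspose_apply, star_trivial, hM]
      ring_nf
    · intro x hx
      simp only [star_trivial, RCLike.ofReal_pos]
      set p : ℝ → ℝ := fun t => ∑ i : Fin n, x i * t ^ (n - 1 - i.1) with hp
      have hpc : Continuous p :=
        continuous_finset_sum _ (fun i _ => continuous_const.mul (continuous_pow _))
      have hfc : Continuous (fun t => (p t)^2 * (1 - t)) :=
        (hpc.pow 2).mul (continuous_const.sub continuous_id)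
      -- the key Gram identity
      have key : x ⬝ᵥ M.mulVec x = ∫ t in (0:ℝ)..1, (p t)^2 * (1 - t) := by
        have rhs : (∫ t in (0:ℝ)..1, (p t)^2 * (1 - t))
            = ∑ i : Fin n, ∑ j : Fin n,
              x i * x j * (1 / (((((n-1-i.1)+(n-1-j.1) : ℕ):ℝ)+1) * (((((n-1-i.1)+(n-1-j.1) : ℕ)):ℝ)+2))) := by
          have expand : ∀ t : ℝ, (p t)^2 * (1 - t)
              = ∑ i : Fin n, ∑ j : Fin n,
                (x i * x j) * (t ^ ((n-1-i.1)+(n-1-j.1)) * (1 - t)) := by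
            intro t
            have h2 : (p t)^2 = ∑ i : Fin n, ∑ j : Fin n,
                (x i * t ^ (n-1-i.1)) * (x j * t ^ (n-1-j.1)) := by
              rw [hp, sq, Finset.sum_mul_sum]
            rw [h2, Finset.sum_mul]
            refine Finset.sum_congr rfl (fun i _ => ?_)
            rw [Finset.sum_mul]
            refine Finset.sum_congr rfl (fun j _ => ?_)
            rw [pow_add]; ring
          have hint : ∀ (i : Fin n), ∀ (j : Fin n), IntervalIntegrable
              (fun t : ℝ => (x i * x j) * (t ^ ((n-1-i.1)+(n-1-j.1)) * (1 - t)))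
              MeasureTheory.volume 0 1 :=
            fun i j => (continuous_const.mul ((continuous_pow _).mul
              (continuous_const.sub continuous_id))).intervalIntegrable _ _
          have hint2 : ∀ (i : Fin n), IntervalIntegrable
              (fun t : ℝ => ∑ j : Fin n, (x i * x j) * (t ^ ((n-1-i.1)+(n-1-j.1)) * (1 - t)))
              MeasureTheory.volume 0 1 :=
            fun i => (continuous_finset_sum _ (fun j _ => continuous_const.mul
              ((continuous_pow _).mul (continuous_const.sub continuous_id)))).intervalIntegrable _ _
          simp_rw [expand]
          rw [integral_finset_sum (fun i _ => hint2 i)]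
          refine Finset.sum_congr rfl (fun i _ => ?_)
          rw [integral_finset_sum (fun j _ => hint i j)]
          refine Finset.sum_congr rfl (fun j _ => ?_)
          rw [integral_const_mul, momInt]
        rw [rhs]
        simp only [dotProduct, mulVec, Finset.mul_sum]
        refine Finset.sum_congr rfl (fun i _ => Finset.sum_congr rfl (fun j _ => ?_))
        have hcast : ((((n-1-i.1)+(n-1-j.1) : ℕ)):ℝ) = (2 * n : ℝ) - (i.1 + 1) - (j.1 + 1) := by
          have hi := i.2; have hj := j.2
          rw [Nat.cast_add, Nat.cast_sub (by omega), Nat.cast_sub (by omega),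
            Nat.cast_sub (by omega), Nat.cast_sub (by omega)]
          push_cast
          ring
        rw [hM i j, hcast]
        ring
      rw [key]
      -- the polynomial is nonzero, find a point where it is nonzero
      obtain ⟨i₀, hi₀⟩ := Function.ne_iff.1 hx
      simp only [Pi.zero_apply] at hi₀
      set P : ℝ[X] := ∑ i : Fin n, C (x i) * X ^ (n - 1 - i.1) with hPdef
      have hPeval : ∀ t, P.eval t = p t := by
        intro t; rw [hPdef, hp]; simp [eval_finset_sum]
      have hPne : P ≠ 0 := by
        intro h0
        have hc : P.coeff (n - 1 - i₀.1) = x i₀ := by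
          rw [hPdef, finset_sum_coeff]
          rw [Finset.sum_eq_single i₀]
          · simp [coeff_C_mul, coeff_X_pow]
          · intro b _ hb
            have hne : ¬ (n - 1 - i₀.1 = n - 1 - b.1) := by
              have := b.2; have := i₀.2
              intro h; apply hb; apply Fin.ext; omega
            simp [coeff_C_mul, coeff_X_pow, hne]
          · simp
        rw [h0] at hc
        simp at hc
        exact hi₀ hc.symm
      have hroots : {t : ℝ | P.IsRoot t}.Finite := P.finite_setOf_isRoot hPne
      have hIoo : (Set.Ioo (0:ℝ) 1).Infinite := Set.Ioo_infinite (by norm_num)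
      obtain ⟨t₀, ht₀⟩ := (hIoo.diff hroots).nonempty
      obtain ⟨⟨ht₀0, ht₀1⟩, ht₀r⟩ := ht₀
      have hpt₀ : p t₀ ≠ 0 := by
        intro h; exact ht₀r (by simpa [IsRoot, hPeval] using h)
      have hft₀ : 0 < (p t₀)^2 * (1 - t₀) := by
        have h2 : 0 < (p t₀)^2 := by positivity
        nlinarith
      -- neighborhood where integrand positive
      have hopen : IsOpen {t : ℝ | 0 < (p t)^2 * (1 - t)} := isOpen_lt continuous_const hfc
      obtain ⟨ε, hε, hball⟩ := Metric.isOpen_iff.1 hopen t₀ hft₀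
      set δ : ℝ := min ε (min t₀ (1 - t₀)) / 2 with hδdef
      have hδ : 0 < δ := by
        apply div_pos _ (by norm_num)
        exact lt_min hε (lt_min ht₀0 (by linarith))
      have hδε : δ < ε := by
        have : min ε (min t₀ (1 - t₀)) ≤ ε := min_le_left _ _
        rw [hδdef]; linarith
      have hδt₀ : δ < t₀ := by
        have h1 : min ε (min t₀ (1 - t₀)) ≤ t₀ := (min_le_right _ _).trans (min_le_left _ _)
        rw [hδdef]; linarith
      have hδ1 : δ < 1 - t₀ := by
        have h1 : min ε (min t₀ (1 - t₀)) ≤ 1 - t₀ := (min_le_right _ _).trans (min_le_right _ _)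
        rw [hδdef]; linarith
      have hnn : ∀ t ∈ Set.Icc (0:ℝ) 1, 0 ≤ (p t)^2 * (1 - t) := by
        intro t ht
        have := sq_nonneg (p t)
        nlinarith [ht.2]
      have hsub : (∫ t in (t₀ - δ)..(t₀ + δ), (p t)^2 * (1 - t))
          ≤ ∫ t in (0:ℝ)..1, (p t)^2 * (1 - t) :=
        subint hfc hnn (by linarith) (by linarith) (by linarith)
      have hpos : 0 < ∫ t in (t₀ - δ)..(t₀ + δ), (p t)^2 * (1 - t) := by
        apply intervalIntegral_pos_of_pos_on (hfc.intervalIntegrable _ _) _ (by linarith)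
        intro u hu
        apply hball
        rw [Metric.mem_ball, Real.dist_eq, abs_lt]
        constructor <;> [linarith [hu.1]; linarith [hu.2]]
      linarith
  exact ⟨hpd, (isUnit_iff_ne_zero).2 (ne_of_gt hpd.det_pos)⟩
end

section
/- Let n ≥ 1 and let F^{-1} be the n×n matrix with entries (F^{-1})_{m,j} = (−1)^{m+j} / ((n−m)! (n−j)! (2n−m−j+1)(2n−m−j+2)). Then F^{-1} is invertible and all entries of its inverse F are positive. -/
open Finset Polynomial Matrix



lemma fd_poly (p : ℝ[X]) :
    fwdDiff (1:ℝ) (fun x : ℝ => p.eval x) = fun x => (p.comp (X + 1) - p).eval x := by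
  funext x
  simp [fwdDiff, Polynomial.eval_comp]

lemma deg_comp_sub (p : ℝ[X]) (hp : p ≠ 0) : (p.comp (X + 1) - p).degree < p.degree := by
  have hX : (X + 1 : ℝ[X]).natDegree = 1 := by
    simpa using Polynomial.natDegree_X_add_C (1:ℝ)
  have hc : (p.comp (X + 1)).leadingCoeff = p.leadingCoeff := by
    rw [Polynomial.leadingCoeff_comp (by rw [hX]; norm_num)]
    have : (X + 1 : ℝ[X]).leadingCoeff = 1 := by
      have := Polynomial.leadingCoeff_X_add_C (1:ℝ)
      simpa using this
    rw [this, one_pow, mul_one]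
  have hne : p.comp (X + 1) ≠ 0 := by
    intro h
    apply hp
    have := hc
    rw [h, Polynomial.leadingCoeff_zero] at this
    exact Polynomial.leadingCoeff_eq_zero.mp this.symm
  have hd : (p.comp (X + 1)).degree = p.degree := by
    rw [Polynomial.degree_eq_natDegree hne, Polynomial.degree_eq_natDegree hp,
      Polynomial.natDegree_comp, hX, mul_one]
  have := Polynomial.degree_sub_lt hd hne hc
  rwa [hd] at this

lemma fd_iter_zero : ∀ (k : ℕ) (p : ℝ[X]), p.degree < (k : ℕ) → ∀ x : ℝ,
    (fwdDiff (1:ℝ))^[k] (fun x : ℝ => p.eval x) x = 0 := by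
  intro k
  induction k with
  | zero =>
    intro p hp x
    have : p = 0 := by
      rw [← Polynomial.degree_eq_bot]
      exact Nat.WithBot.lt_zero_iff.mp (by exact_mod_cast hp)
    simp [this]
  | succ k ih =>
    intro p hp x
    rw [Function.iterate_succ_apply, fd_poly]
    by_cases h0 : p = 0
    · have h1 : p.comp (X+1) - p = 0 := by simp [h0]
      rw [h1]
      have : ((0:ℝ[X]).degree) < (k:ℕ) := by
        rw [Polynomial.degree_zero]
        exact_mod_cast WithBot.bot_lt_coe k
      simpa using ih 0 this x
    · apply ih
      have h2 : (p.comp (X + 1) - p).degree < p.degree := deg_comp_sub p h0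
      rw [Polynomial.degree_eq_natDegree h0] at h2 hp
      have hnd : p.natDegree < k + 1 := by exact_mod_cast hp
      calc (p.comp (X + 1) - p).degree < (p.natDegree : WithBot ℕ) := h2
        _ ≤ (k : ℕ) := by exact_mod_cast Nat.lt_succ_iff.mp hnd

-- Lemma A : alternating binomial sums kill polynomials of degree < k
lemma alt_sum_poly (k : ℕ) (p : ℝ[X]) (hp : p.degree < (k : ℕ)) :
    ∑ j ∈ range (k + 1), (-1 : ℝ)^j * (k.choose j) * p.eval (j:ℝ) = 0 := by
  have h := fwdDiff_iter_eq_sum_shift (1:ℝ) (fun x : ℝ => p.eval x) k 0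
  rw [fd_iter_zero k p hp 0] at h
  simp only [zero_add, nsmul_eq_mul, mul_one, zsmul_eq_mul, Int.cast_mul, Int.cast_pow,
    Int.cast_neg, Int.cast_one, Int.cast_natCast] at h
  have h3 : ∑ j ∈ range (k + 1), (-1 : ℝ)^j * (k.choose j) * p.eval (j:ℝ)
      = (-1:ℝ)^k * ∑ j ∈ range (k + 1), ((-1:ℝ)^(k-j) * (k.choose j)) * p.eval (j:ℝ) := by
    rw [Finset.mul_sum]
    apply Finset.sum_congr rfl
    intro j hj
    rw [Finset.mem_range] at hj
    have hjk : j ≤ k := Nat.lt_succ_iff.mp hj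
    have he : (-1:ℝ)^k * (-1:ℝ)^(k-j) = (-1:ℝ)^j := by
      rw [← pow_add]
      have : k + (k - j) = 2*(k-j) + j := by omega
      rw [this, pow_add, pow_mul]
      norm_num
    calc (-1 : ℝ)^j * (k.choose j) * p.eval (j:ℝ)
        = ((-1:ℝ)^k * (-1:ℝ)^(k-j)) * (k.choose j) * p.eval (j:ℝ) := by rw [he]
      _ = (-1:ℝ)^k * ((-1:ℝ)^(k-j) * (k.choose j) * p.eval (j:ℝ)) := by ring
  rw [h3, ← h, mul_zero]

-- Lemma B : beta-type identity
lemma beta_sum : ∀ (k : ℕ) (a : ℝ), 0 < a →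
    ∑ j ∈ range (k + 1), (-1:ℝ)^j * (k.choose j) / (a + j)
      = (k.factorial : ℝ) / ∏ r ∈ range (k + 1), (a + r) := by
  intro k
  induction k with
  | zero => intro a ha; simp
  | succ k ih =>
    intro a ha
    have ha1 : (0:ℝ) < a + 1 := by linarith
    have hprodpos : ∀ (b : ℝ), 0 < b → 0 < ∏ r ∈ range (k + 1), (b + r) := by
      intro b hb
      apply Finset.prod_pos
      intro r _
      positivity
    have hsplit : ∑ j ∈ range (k + 2), (-1:ℝ)^j * ((k+1).choose j) / (a + j)
        = (∑ j ∈ range (k + 1), (-1:ℝ)^j * (k.choose j) / (a + j))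
          - ∑ j ∈ range (k + 1), (-1:ℝ)^j * (k.choose j) / ((a + 1) + j) := by
      have e1 : ∀ j ∈ range (k + 2), (-1:ℝ)^j * ((k+1).choose j) / (a + j)
          = (-1:ℝ)^j * (k.choose j) / (a + j)
            + (if j = 0 then 0 else (-1:ℝ)^j * (k.choose (j-1)) / (a + j)) := by
        intro j _
        match j with
        | 0 => simp
        | (i+1) =>
          rw [if_neg (Nat.succ_ne_zero i), Nat.add_sub_cancel]
          rw [Nat.choose_succ_succ (n := k) (k := i)]
          push_cast
          ring
      rw [Finset.sum_congr rfl e1, Finset.sum_add_distrib, sub_eq_add_neg]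
      congr 1
      · rw [Finset.sum_range_succ]
        simp [Nat.choose_eq_zero_of_lt (Nat.lt_succ_self k)]
      · rw [Finset.sum_range_succ' (fun j => if j = 0 then (0:ℝ) else (-1:ℝ)^j * (k.choose (j-1)) / (a + j))]
        rw [if_pos rfl, add_zero, ← Finset.sum_neg_distrib]
        refine Finset.sum_congr rfl fun i _ => ?_
        rw [if_neg (Nat.succ_ne_zero i), Nat.add_sub_cancel]
        push_cast
        ring
    rw [hsplit, ih a ha, ih (a+1) ha1]
    have hP : ∏ r ∈ range (k + 2), (a + r) = (∏ r ∈ range (k + 1), (a + r)) * (a + (k+1)) := by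
      rw [Finset.prod_range_succ]; push_cast; ring
    have hQ : ∏ r ∈ range (k + 2), (a + r) = a * ∏ r ∈ range (k + 1), ((a+1) + r) := by
      rw [Finset.prod_range_succ' (fun r => (a + r))]
      simp only [Nat.cast_zero, add_zero]
      rw [mul_comm]
      congr 1
      apply Finset.prod_congr rfl
      intro r _
      push_cast; ring
    have key : (∏ r ∈ range (k + 1), ((a+1)+r)) * a = (∏ r ∈ range (k + 1), (a + r)) * (a + (k+1)) := by
      rw [mul_comm]
      exact hQ.symm.trans hP
    have h1 := hprodpos a ha
    have h2 := hprodpos (a+1) ha1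
    rw [hQ, Nat.factorial_succ]
    push_cast
    field_simp
    linear_combination key

noncomputable def ee (i j : ℕ) : ℝ := 1/(((i:ℝ)+j+1)*((i:ℝ)+j+2))
noncomputable def cc (k i : ℕ) : ℝ := (-1)^i * (k.choose i) * ((k+i+1).choose i)

lemma asc_prod (n k : ℕ) : n.ascFactorial k = ∏ r ∈ range k, (n + r) := by
  induction k with
  | zero => simp
  | succ k ih => rw [Nat.ascFactorial_succ, prod_range_succ, ih, mul_comm]

lemma nat_choose_prod (k j : ℕ) :
    ((k+j+1).choose j) * (k+1).factorial = ∏ r ∈ range (k+1), (j+r+1) := by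
  have h1 : (k+j+1).choose j * (j.factorial * (k+1).factorial) = (k+j+1).factorial := by
    have := Nat.choose_mul_factorial_mul_factorial (n := k+j+1) (k := j) (by omega)
    have hsub : k + j + 1 - j = k + 1 := by omega
    rw [hsub] at this
    rw [← this]; ring
  have h2 : j.factorial * (j+1).ascFactorial (k+1) = (j + (k+1)).factorial :=
    Nat.factorial_mul_ascFactorial j (k+1)
  have h3 : (j+1).ascFactorial (k+1) = ∏ r ∈ range (k+1), (j+r+1) := by
    rw [asc_prod]
    exact Finset.prod_congr rfl fun r _ => by omega
  have h4 : (k+j+1).factorial = (j + (k+1)).factorial := by congr 1; omega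
  apply Nat.eq_of_mul_eq_mul_left (Nat.factorial_pos j)
  calc j.factorial * ((k+j+1).choose j * (k+1).factorial)
      = (k+j+1).choose j * (j.factorial * (k+1).factorial) := by ring
    _ = (k+j+1).factorial := h1
    _ = (j + (k+1)).factorial := h4
    _ = j.factorial * (j+1).ascFactorial (k+1) := h2.symm
    _ = j.factorial * ∏ r ∈ range (k+1), (j+r+1) := by rw [h3]

lemma real_choose_prod (k j : ℕ) :
    (((k+j+1).choose j : ℕ) : ℝ) * ((k+1).factorial : ℝ) = ∏ r ∈ range (k+1), ((j:ℝ)+r+1) := by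
  have h := Nat.cast_inj (R := ℝ) |>.mpr (nat_choose_prod k j)
  push_cast at h
  rw [h]

lemma ee_pos (i j : ℕ) : 0 < ee i j := by
  unfold ee; positivity

lemma S_lt (i k : ℕ) (hik : i < k) :
    ∑ j ∈ range (k+1), cc k j * ee i j = 0 := by
  set s := ((range (k+1)).erase i).erase (i+1) with hs
  set P : ℝ[X] := ∏ r ∈ s, (X + C ((r:ℝ)+1)) with hP
  have hi : i ∈ range (k+1) := by rw [mem_range]; omega
  have hi1 : i + 1 ∈ (range (k+1)).erase i := by
    rw [mem_erase, mem_range]; exact ⟨by omega, by omega⟩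
  have hterm : ∀ j ∈ range (k+1), cc k j * ee i j
      = (-1:ℝ)^j * (k.choose j) * P.eval (j:ℝ) / ((k+1).factorial : ℝ) := by
    intro j _
    have hprod : ∏ r ∈ range (k+1), ((j:ℝ)+r+1)
        = ((j:ℝ)+i+1) * (((j:ℝ)+(i+1:ℕ)+1) * ∏ r ∈ s, ((j:ℝ)+r+1)) := by
      rw [← Finset.mul_prod_erase _ _ hi, ← Finset.mul_prod_erase _ _ hi1]
    have hPe : P.eval (j:ℝ) = ∏ r ∈ s, ((j:ℝ)+r+1) := by
      rw [hP, Polynomial.eval_prod]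
      exact Finset.prod_congr rfl fun r _ => by simp [add_assoc]
    have key : (((k+j+1).choose j : ℕ) : ℝ) * ((k+1).factorial : ℝ)
        = (((i:ℝ)+j+1) * ((i:ℝ)+j+2)) * ∏ r ∈ s, ((j:ℝ)+r+1) := by
      rw [real_choose_prod k j, hprod]
      push_cast
      ring
    have hfac : ((((k+1).factorial : ℕ)) : ℝ) ≠ 0 := by positivity
    have h12 : (((i:ℝ)+j+1) * ((i:ℝ)+j+2)) ≠ 0 := by positivity
    unfold cc ee
    rw [hPe]
    field_simp
    linear_combination ((k.choose j : ℕ) : ℝ) * key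
  rw [Finset.sum_congr rfl hterm]
  rw [← Finset.sum_div]
  have hdeg : P.degree < (k : ℕ) := by
    have hmon : ∀ r ∈ s, (X + C ((r:ℝ)+1)).Monic := fun r _ => Polynomial.monic_X_add_C _
    have hne : ∀ r ∈ s, (X + C ((r:ℝ)+1)) ≠ 0 := fun r hr => (hmon r hr).ne_zero
    have hnd : P.natDegree = s.card := by
      rw [hP, Polynomial.natDegree_prod _ _ hne]
      rw [Finset.sum_congr rfl fun r _ => Polynomial.natDegree_X_add_C (((r:ℕ):ℝ)+1)]
      simp
    have hcard : s.card = k - 1 := by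
      rw [hs, Finset.card_erase_of_mem hi1, Finset.card_erase_of_mem hi, Finset.card_range]
      omega
    have : P.degree ≤ (P.natDegree : WithBot ℕ) := Polynomial.degree_le_natDegree
    apply lt_of_le_of_lt this
    rw [hnd, hcard]
    exact_mod_cast Nat.sub_lt (by omega) (by omega)
  rw [alt_sum_poly k P hdeg, zero_div]
lemma nat_prod_reflect (k : ℕ) : ∏ r ∈ range k, (k+1-r) = (k+1).factorial := by
  have h := Finset.prod_range_reflect (fun r => k+1-r) k
  have h2 : ∏ j ∈ range k, (k+1-(k-1-j)) = ∏ j ∈ range k, (j+2) := by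
    apply Finset.prod_congr rfl
    intro j hj
    rw [mem_range] at hj
    omega
  have h3 : ∏ j ∈ range k, (j+2) = (k+1).factorial := by
    have := Finset.prod_range_add_one_eq_factorial (k+1)
    rw [Finset.prod_range_succ' (fun x => x + 1)] at this
    simpa using this
  rw [← h, h2, h3]

lemma S_eq (k : ℕ) :
    ∑ j ∈ range (k+1), cc k j * ee k j
      = (-1:ℝ)^k * (k.factorial : ℝ) / ∏ r ∈ range (k+1), ((k:ℝ)+2+r) := by
  rcases Nat.eq_zero_or_pos k with hk0 | hkpos
  · subst hk0
    simp [cc, ee]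
  set p : ℝ[X] := ∏ r ∈ range k, (X + C ((r:ℝ)+1)) with hp
  set a : ℝ := -((k:ℝ)+2) with ha
  set q : ℝ[X] := p /ₘ (X - C a) with hq
  have hmonic : (X - C a).Monic := Polynomial.monic_X_sub_C a
  have hdivmod : p %ₘ (X - C a) + (X - C a) * q = p := Polynomial.modByMonic_add_div p (X - C a)
  have hmod : p %ₘ (X - C a) = C (p.eval a) := Polynomial.modByMonic_X_sub_C_eq_C_eval p a
  have hfacne : (((k+1).factorial : ℕ) : ℝ) ≠ 0 := by positivity
  have hpeval : p.eval a = (-1:ℝ)^k * ((k+1).factorial : ℝ) := by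
    rw [hp, Polynomial.eval_prod]
    have h1 : ∀ r ∈ range k, Polynomial.eval a (X + C ((r:ℝ)+1)) = (-1) * (((k+1-r : ℕ)):ℝ) := by
      intro r hr
      rw [mem_range] at hr
      have hc : ((k+1-r : ℕ):ℝ) = (k:ℝ)+1-r := by
        have hrk : r ≤ k+1 := by omega
        push_cast [Nat.cast_sub hrk]
        ring
      rw [hc]
      simp [ha]
      ring
    rw [Finset.prod_congr rfl h1, Finset.prod_mul_distrib, Finset.prod_const, Finset.card_range]
    rw [← Nat.cast_prod, nat_prod_reflect k]
  -- evaluation of p at natural j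
  have hpj : ∀ j : ℕ, p.eval (j:ℝ) = ∏ r ∈ range k, ((j:ℝ)+r+1) := by
    intro j
    rw [hp, Polynomial.eval_prod]
    exact Finset.prod_congr rfl fun r _ => by simp [add_assoc]
  have hqj : ∀ j : ℕ, p.eval (j:ℝ) = ((j:ℝ)+k+2) * q.eval (j:ℝ) + (-1:ℝ)^k * ((k+1).factorial : ℝ) := by
    intro j
    have h5 := congrArg (Polynomial.eval ((j:ℕ):ℝ)) hdivmod
    rw [Polynomial.eval_add, Polynomial.eval_mul, Polynomial.eval_sub, Polynomial.eval_X,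
      Polynomial.eval_C, hmod, Polynomial.eval_C, hpeval] at h5
    rw [← h5, ha]
    ring
  have hterm : ∀ j ∈ range (k+1), cc k j * ee k j
      = (-1:ℝ)^j * (k.choose j) * q.eval (j:ℝ) / (((k+1).factorial : ℕ) : ℝ)
        + (-1:ℝ)^k * ((-1:ℝ)^j * (k.choose j) / (((k:ℝ)+2) + j)) := by
    intro j _
    have hC2 : (((k+j+1).choose j : ℕ) : ℝ)
        = p.eval (j:ℝ) * ((j:ℝ)+k+1) / (((k+1).factorial : ℕ) : ℝ) := by
      rw [eq_div_iff hfacne, hpj j]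
      have := real_choose_prod k j
      rw [Finset.prod_range_succ] at this
      rw [this]
    unfold cc ee
    rw [hC2, hqj j]
    have d1 : ((k:ℝ)+j+1) ≠ 0 := by positivity
    have d2 : ((k:ℝ)+j+2) ≠ 0 := by positivity
    have d3 : (((k:ℝ)+2) + j) ≠ 0 := by positivity
    field_simp
    ring
  rw [Finset.sum_congr rfl hterm, Finset.sum_add_distrib, ← Finset.sum_div, ← Finset.mul_sum]
  -- first sum vanishes
  have hpne : p ≠ 0 := by
    apply Polynomial.Monic.ne_zero
    exact Polynomial.monic_prod_of_monic _ _ fun r _ => Polynomial.monic_X_add_C _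
  have hdegp : p.degree = (k : ℕ) := by
    rw [hp, Polynomial.degree_prod]
    rw [Finset.sum_congr rfl fun r _ => Polynomial.degree_X_add_C (((r:ℕ):ℝ)+1)]
    simp
  have hdegq : q.degree < (k:ℕ) := by
    rw [← hdegp]
    exact Polynomial.degree_divByMonic_lt p (X - C a) hpne (by rw [Polynomial.degree_X_sub_C]; norm_num)
  rw [alt_sum_poly k q hdegq, zero_div, zero_add]
  rw [beta_sum k ((k:ℝ)+2) (by positivity)]
  rw [mul_div_assoc]
theorem stmt_8 (n : ℕ) (hn : 1 ≤ n)
    (Finv : Matrix (Fin n) (Fin n) ℝ)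
    (hF : ∀ m j : Fin n, Finv m j =
      (-1 : ℝ) ^ ((m.1 + 1) + (j.1 + 1)) /
        ((Nat.factorial (n - (m.1 + 1)) : ℝ) * (Nat.factorial (n - (j.1 + 1)) : ℝ) *
          ((2 * n : ℝ) - (m.1 + 1) - (j.1 + 1) + 1) * ((2 * n : ℝ) - (m.1 + 1) - (j.1 + 1) + 2))) :
    IsUnit Finv.det ∧ ∀ m j : Fin n, 0 < Finv⁻¹ m j := by
  classical
  -- the moment matrix and the orthogonal-polynomial coefficient matrix
  set Mm : Matrix (Fin n) (Fin n) ℝ := Matrix.of fun i l => ee i.1 l.1 with hMm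
  set Cm : Matrix (Fin n) (Fin n) ℝ := Matrix.of fun k i => cc k.1 i.1 with hCm
  set dd : Fin n → ℝ := fun k =>
    (((2*k.1+1).choose k.1 : ℕ):ℝ) * (k.1.factorial : ℝ) / ∏ r ∈ range (k.1+1), ((k.1:ℝ)+2+r)
    with hdd
  have hddpos : ∀ k : Fin n, 0 < dd k := by
    intro k
    have h1 : (0:ℝ) < (((2*k.1+1).choose k.1 : ℕ):ℝ) := by
      exact_mod_cast Nat.choose_pos (by omega)
    have h2 : (0:ℝ) < (k.1.factorial : ℝ) := by positivity
    have h3 : (0:ℝ) < ∏ r ∈ range (k.1+1), ((k.1:ℝ)+2+r) :=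
      Finset.prod_pos fun r _ => by positivity
    rw [hdd]
    positivity
  have hee_symm : ∀ i j : ℕ, ee i j = ee j i := by
    intro i j; unfold ee; ring_nf
  have hcc_zero : ∀ k i : ℕ, k < i → cc k i = 0 := by
    intro k i h; unfold cc; rw [Nat.choose_eq_zero_of_lt h]; ring
  -- inner sums
  have hinner : ∀ (k : Fin n) (t : ℕ), (∑ i : Fin n, cc k.1 i.1 * ee i.1 t)
      = ∑ j ∈ range (k.1+1), cc k.1 j * ee t j := by
    intro k t
    rw [Fin.sum_univ_eq_sum_range (fun i => cc k.1 i * ee i t) n]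
    rw [← Finset.sum_subset (Finset.range_subset_range.mpr (by omega : k.1+1 ≤ n))
      (fun x _ hx => by
        rw [Finset.mem_range, not_lt] at hx
        rw [hcc_zero k.1 x (by omega)]
        ring)]
    exact Finset.sum_congr rfl fun j _ => by rw [hee_symm]
  -- E = C M Cᵀ
  have hE : ∀ k l : Fin n, (Cm * Mm * Cmᵀ) k l
      = ∑ j : Fin n, (∑ i : Fin n, cc k.1 i.1 * ee i.1 j.1) * cc l.1 j.1 := by
    intro k l
    simp only [Matrix.mul_apply, Matrix.transpose_apply, hCm, hMm, Matrix.of_apply,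
      Finset.sum_mul]
  have hElt : ∀ k l : Fin n, l.1 < k.1 → (Cm * Mm * Cmᵀ) k l = 0 := by
    intro k l hlk
    rw [hE k l]
    apply Finset.sum_eq_zero
    intro j _
    rcases lt_or_ge j.1 k.1 with hc | hc
    · rw [hinner k j.1, S_lt j.1 k.1 hc, zero_mul]
    · rw [hcc_zero l.1 j.1 (by omega), mul_zero]
  have hEkk : ∀ k : Fin n, (Cm * Mm * Cmᵀ) k k = dd k := by
    intro k
    rw [hE k k]
    rw [Finset.sum_eq_single k]
    · rw [hinner k k.1, S_eq k.1]
      unfold cc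
      rw [Nat.choose_self]
      have h3 : (0:ℝ) < ∏ r ∈ range (k.1+1), ((k.1:ℝ)+2+r) :=
        Finset.prod_pos fun r _ => by positivity
      rw [hdd]
      have h2k : k.1 + k.1 + 1 = 2*k.1+1 := by omega
      rw [h2k]
      field_simp
      ring_nf
      rw [pow_mul']
      norm_num
    · intro j _ hj
      rcases lt_or_ge j.1 k.1 with hc | hc
      · rw [hinner k j.1, S_lt j.1 k.1 hc, zero_mul]
      · have : k.1 < j.1 := by
          rcases Nat.lt_or_ge k.1 j.1 with h | h
          · exact h
          · exact absurd (Fin.ext (by omega)) hj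
        rw [hcc_zero k.1 j.1 this, mul_zero]
    · intro h
      exact absurd (Finset.mem_univ k) h
  have hEsym : (Cm * Mm * Cmᵀ)ᵀ = Cm * Mm * Cmᵀ := by
    have hMsym : Mmᵀ = Mm := by
      ext i j
      rw [Matrix.transpose_apply]
      exact hee_symm j.1 i.1
    rw [Matrix.transpose_mul, Matrix.transpose_mul, Matrix.transpose_transpose, hMsym,
      Matrix.mul_assoc]
  have hEdiag : Cm * Mm * Cmᵀ = Matrix.diagonal dd := by
    ext k l
    rcases lt_trichotomy k.1 l.1 with h | h | h
    · rw [← Matrix.transpose_apply (Cm * Mm * Cmᵀ) l k] at *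
      rw [hEsym] at *
      rw [hElt l k h, Matrix.diagonal_apply_ne _ (fun hkl => by rw [hkl] at h; omega)]
    · have : k = l := Fin.ext h
      subst this
      rw [hEkk k, Matrix.diagonal_apply_eq]
    · rw [hElt k l h, Matrix.diagonal_apply_ne _ (fun hkl => by rw [hkl] at h; omega)]
  -- C is invertible
  have hCdet : IsUnit Cm.det := by
    have htri : Cm.BlockTriangular OrderDual.toDual := by
      intro i j hij
      exact hcc_zero i.1 j.1 (by exact_mod_cast hij)
    rw [Matrix.det_of_lowerTriangular Cm htri]
    rw [isUnit_iff_ne_zero]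
    apply Finset.prod_ne_zero_iff.mpr
    intro k _
    show cc k.1 k.1 ≠ 0
    unfold cc
    have h1 : (0:ℝ) < (((k.1+k.1+1).choose k.1 : ℕ):ℝ) := by
      exact_mod_cast Nat.choose_pos (by omega)
    simp only [Nat.choose_self, Nat.cast_one]
    intro hcon
    rcases mul_eq_zero.mp hcon with h | h
    · rcases mul_eq_zero.mp h with h' | h'
      · exact absurd h' (by positivity)
      · norm_num at h'
    · exact absurd h (ne_of_gt h1)
  haveI : Invertible Cm := Cm.invertibleOfIsUnitDet hCdet
  haveI : Invertible Cmᵀ := Cm.invertibleTranspose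
  set Dinv : Matrix (Fin n) (Fin n) ℝ := Matrix.diagonal (fun k => (dd k)⁻¹) with hDinv
  set Nm : Matrix (Fin n) (Fin n) ℝ := Cmᵀ * Dinv * Cm with hNm
  have hdiagcancel : Matrix.diagonal dd * Dinv = 1 := by
    rw [hDinv, Matrix.diagonal_mul_diagonal]
    convert Matrix.diagonal_one
    exact mul_inv_cancel₀ (ne_of_gt (hddpos _))
  have hMN : Mm * Nm = 1 := by
    have h1 : Mm * Cmᵀ = Cm⁻¹ * Matrix.diagonal dd := by
      rw [← hEdiag, Matrix.mul_assoc Cm Mm Cmᵀ, Matrix.inv_mul_cancel_left_of_invertible]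
    calc Mm * Nm = (Mm * Cmᵀ) * Dinv * Cm := by
          rw [hNm]
          rw [← Matrix.mul_assoc, ← Matrix.mul_assoc]
      _ = Cm⁻¹ * (Matrix.diagonal dd * Dinv) * Cm := by
          rw [h1, Matrix.mul_assoc Cm⁻¹, ← Matrix.mul_assoc]
      _ = Cm⁻¹ * Cm := by rw [hdiagcancel, Matrix.mul_one]
      _ = 1 := Matrix.nonsing_inv_mul Cm hCdet
  have hNM : Nm * Mm = 1 := by
    have h2 : Cm * Mm = Matrix.diagonal dd * (Cmᵀ)⁻¹ := by
      rw [← hEdiag, Matrix.mul_inv_cancel_right_of_invertible]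
    calc Nm * Mm = Cmᵀ * Dinv * (Cm * Mm) := by rw [hNm, Matrix.mul_assoc]
      _ = Cmᵀ * (Dinv * Matrix.diagonal dd) * (Cmᵀ)⁻¹ := by
          rw [h2, ← Matrix.mul_assoc, Matrix.mul_assoc _ Dinv, ← Matrix.mul_assoc]
      _ = Cmᵀ * (Cmᵀ)⁻¹ := by
          rw [hDinv, Matrix.diagonal_mul_diagonal]
          have : (Matrix.diagonal fun k => (dd k)⁻¹ * dd k) = (1 : Matrix (Fin n) (Fin n) ℝ) := by
            convert Matrix.diagonal_one
            exact inv_mul_cancel₀ (ne_of_gt (hddpos _))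
          rw [this, Matrix.mul_one]
      _ = 1 := Matrix.mul_nonsing_inv Cmᵀ (by rwa [Matrix.det_transpose])
  -- diagonal sign/factorial matrices
  set dmf : Fin n → ℝ := fun m => ((-1:ℝ))^m.1 / ((n - (m.1+1)).factorial : ℝ) with hdmf
  set dmf' : Fin n → ℝ := fun m => ((-1:ℝ))^m.1 * ((n - (m.1+1)).factorial : ℝ) with hdmf'
  set Dm : Matrix (Fin n) (Fin n) ℝ := Matrix.diagonal dmf with hDm
  set Dm' : Matrix (Fin n) (Fin n) ℝ := Matrix.diagonal dmf' with hDm'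
  have hfactne : ∀ m : Fin n, ((n - (m.1+1)).factorial : ℝ) ≠ 0 := fun m => by positivity
  have hsq : ∀ m : Fin n, ((-1:ℝ))^m.1 * ((-1:ℝ))^m.1 = 1 := by
    intro m
    rw [← pow_add, show m.1 + m.1 = 2*m.1 by omega, pow_mul]
    norm_num
  have hDmDm' : Dm * Dm' = 1 := by
    rw [hDm, hDm', Matrix.diagonal_mul_diagonal]
    convert Matrix.diagonal_one with m
    rw [hdmf, hdmf']
    have h1 := hfactne m
    field_simp
    linear_combination hsq m
  have hDm'Dm : Dm' * Dm = 1 := by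
    rw [hDm, hDm', Matrix.diagonal_mul_diagonal]
    convert Matrix.diagonal_one with m
    rw [hdmf, hdmf']
    have h1 := hfactne m
    field_simp
    linear_combination hsq m
  -- Finv in terms of Mm
  have hFeq : Finv = Dm * (Mm.submatrix ⇑(Fin.revPerm (n := n)) ⇑(Fin.revPerm (n := n))) * Dm := by
    ext m j
    rw [Matrix.mul_diagonal, Matrix.diagonal_mul, Matrix.submatrix_apply]
    rw [hF m j]
    have hm1 : m.1 + 1 ≤ n := m.isLt
    have hj1 : j.1 + 1 ≤ n := j.isLt
    have hi : ((n - (m.1+1) : ℕ):ℝ) = (n:ℝ) - m.1 - 1 := by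
      push_cast [Nat.cast_sub hm1]; ring
    have hl : ((n - (j.1+1) : ℕ):ℝ) = (n:ℝ) - j.1 - 1 := by
      push_cast [Nat.cast_sub hj1]; ring
    have hrm : ((Fin.revPerm m : Fin n) : ℕ) = n - (m.1+1) := by
      simp [Fin.revPerm, Fin.val_rev]
    have hrj : ((Fin.revPerm j : Fin n) : ℕ) = n - (j.1+1) := by
      simp [Fin.revPerm, Fin.val_rev]
    have hMme : Mm (Fin.revPerm m) (Fin.revPerm j) = ee (n - (m.1+1)) (n - (j.1+1)) := by
      simp only [hMm, Matrix.of_apply, hrm, hrj]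
    rw [hMme, hdmf]
    unfold ee
    rw [hi, hl]
    have hmr : ((m.1:ℝ)) ≤ (n:ℝ) - 1 := by
      have := m.isLt
      have : ((m.1:ℝ)) ≤ (n:ℝ) - 1 := by
        rw [le_sub_iff_add_le]
        exact_mod_cast m.isLt
      linarith
    have hjr : ((j.1:ℝ)) ≤ (n:ℝ) - 1 := by
      rw [le_sub_iff_add_le]
      exact_mod_cast j.isLt
    have hA : (0:ℝ) < ((n:ℝ) - m.1 - 1) + ((n:ℝ) - j.1 - 1) + 1 := by linarith
    have hB : (0:ℝ) < ((n:ℝ) - m.1 - 1) + ((n:ℝ) - j.1 - 1) + 2 := by linarith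
    have hA' : (2 * (n:ℝ) - (m.1+1) - (j.1+1) + 1) = ((n:ℝ) - m.1 - 1) + ((n:ℝ) - j.1 - 1) + 1 := by ring
    have hB' : (2 * (n:ℝ) - (m.1+1) - (j.1+1) + 2) = ((n:ℝ) - m.1 - 1) + ((n:ℝ) - j.1 - 1) + 2 := by ring
    rw [hA', hB']
    have hfm := hfactne m
    have hfj := hfactne j
    field_simp
    ring
  set G : Matrix (Fin n) (Fin n) ℝ :=
    Dm' * (Nm.submatrix ⇑(Fin.revPerm (n := n)) ⇑(Fin.revPerm (n := n))) * Dm' with hG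
  have hFG : Finv * G = 1 := by
    rw [hFeq, hG]
    have e1 : Dm * Mm.submatrix ⇑(Fin.revPerm (n := n)) ⇑(Fin.revPerm (n := n)) * Dm *
        (Dm' * Nm.submatrix ⇑(Fin.revPerm (n := n)) ⇑(Fin.revPerm (n := n)) * Dm')
        = Dm * (Mm.submatrix ⇑(Fin.revPerm (n := n)) ⇑(Fin.revPerm (n := n)) *
            ((Dm * Dm') * Nm.submatrix ⇑(Fin.revPerm (n := n)) ⇑(Fin.revPerm (n := n)))) * Dm' := by
      simp only [Matrix.mul_assoc]
    rw [e1, hDmDm', Matrix.one_mul, Matrix.submatrix_mul_equiv Mm Nm _ (Fin.revPerm (n := n)) _,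
      hMN, Matrix.submatrix_one_equiv, Matrix.mul_one, hDmDm']
  have hGF : G * Finv = 1 := by
    rw [hFeq, hG]
    have e1 : Dm' * Nm.submatrix ⇑(Fin.revPerm (n := n)) ⇑(Fin.revPerm (n := n)) * Dm' *
        (Dm * Mm.submatrix ⇑(Fin.revPerm (n := n)) ⇑(Fin.revPerm (n := n)) * Dm)
        = Dm' * (Nm.submatrix ⇑(Fin.revPerm (n := n)) ⇑(Fin.revPerm (n := n)) *
            ((Dm' * Dm) * Mm.submatrix ⇑(Fin.revPerm (n := n)) ⇑(Fin.revPerm (n := n)))) * Dm := by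
      simp only [Matrix.mul_assoc]
    rw [e1, hDm'Dm, Matrix.one_mul, Matrix.submatrix_mul_equiv Nm Mm _ (Fin.revPerm (n := n)) _,
      hNM, Matrix.submatrix_one_equiv, Matrix.mul_one, hDm'Dm]
  refine ⟨Matrix.isUnit_det_of_right_inverse hFG, ?_⟩
  have hFinveq : Finv⁻¹ = G := Matrix.inv_eq_right_inv hFG
  intro m j
  rw [hFinveq, hG]
  rw [Matrix.mul_diagonal, Matrix.diagonal_mul, Matrix.submatrix_apply]
  have hNentry : ∀ i l : Fin n, Nm i l = ∑ k : Fin n, cc k.1 i.1 * ((dd k)⁻¹ * cc k.1 l.1) := by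
    intro i l
    rw [hNm, Matrix.mul_assoc, Matrix.mul_apply]
    apply Finset.sum_congr rfl
    intro k _
    rw [Matrix.transpose_apply, hDinv, Matrix.diagonal_mul]
    simp only [hCm, Matrix.of_apply]
  rw [hNentry]
  rw [Finset.mul_sum, Finset.sum_mul]
  set i : ℕ := n - (m.1+1) with hidef
  set l : ℕ := n - (j.1+1) with hldef
  have hrm : ((Fin.revPerm m : Fin n) : ℕ) = i := by simp [Fin.revPerm, Fin.val_rev, hidef]
  have hrj : ((Fin.revPerm j : Fin n) : ℕ) = l := by simp [Fin.revPerm, Fin.val_rev, hldef]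
  have hsign : ((-1:ℝ))^m.1 * ((-1:ℝ))^i * (((-1:ℝ))^j.1 * ((-1:ℝ))^l) = 1 := by
    rw [← pow_add, ← pow_add, ← pow_add]
    have hex : m.1 + i + (j.1 + l) = 2*(n-1) := by
      have := m.isLt
      have := j.isLt
      omega
    rw [hex, pow_mul]
    norm_num
  have hterm : ∀ k : Fin n,
      dmf' m * (cc k.1 (Fin.revPerm m : Fin n).1 * ((dd k)⁻¹ * cc k.1 (Fin.revPerm j : Fin n).1)) * dmf' j
      = ((i.factorial : ℝ) * (k.1.choose i : ℕ) * ((k.1+i+1).choose i : ℕ) * ((k.1.choose l : ℕ))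
          * ((k.1+l+1).choose l : ℕ) * (l.factorial : ℝ)) * (dd k)⁻¹ := by
    intro k
    rw [hrm, hrj, hdmf']
    unfold cc
    have expand : ((-1:ℝ))^m.1 * ((n - (m.1+1)).factorial : ℝ) *
        ((-1:ℝ)^i * (k.1.choose i : ℕ) * ((k.1+i+1).choose i : ℕ) *
          ((dd k)⁻¹ * ((-1:ℝ)^l * (k.1.choose l : ℕ) * ((k.1+l+1).choose l : ℕ)))) *
        ((-1:ℝ)^j.1 * ((n - (j.1+1)).factorial : ℝ))
        = (((-1:ℝ))^m.1 * ((-1:ℝ))^i * (((-1:ℝ))^j.1 * ((-1:ℝ))^l)) *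
          (((i.factorial : ℝ) * (k.1.choose i : ℕ) * ((k.1+i+1).choose i : ℕ) * ((k.1.choose l : ℕ))
          * ((k.1+l+1).choose l : ℕ) * (l.factorial : ℝ)) * (dd k)⁻¹) := by
      rw [← hidef, ← hldef]
      ring
    rw [expand, hsign, one_mul]
  rw [Finset.sum_congr rfl (fun k _ => hterm k)]
  apply Finset.sum_pos'
  · intro k _
    have h1 : (0:ℝ) ≤ (i.factorial : ℝ) * (k.1.choose i : ℕ) * ((k.1+i+1).choose i : ℕ)
        * ((k.1.choose l : ℕ)) * ((k.1+l+1).choose l : ℕ) * (l.factorial : ℝ) := by positivity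
    have h2 : (0:ℝ) ≤ (dd k)⁻¹ := inv_nonneg.mpr (le_of_lt (hddpos k))
    exact mul_nonneg h1 h2
  · refine ⟨⟨n-1, by omega⟩, Finset.mem_univ _, ?_⟩
    have hin : i ≤ n - 1 := by omega
    have hln : l ≤ n - 1 := by omega
    have c1 : (0:ℝ) < ((n-1).choose i : ℕ) := by exact_mod_cast Nat.choose_pos hin
    have c2 : (0:ℝ) < (((n-1)+i+1).choose i : ℕ) := by
      exact_mod_cast Nat.choose_pos (by omega)
    have c3 : (0:ℝ) < ((n-1).choose l : ℕ) := by exact_mod_cast Nat.choose_pos hln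
    have c4 : (0:ℝ) < (((n-1)+l+1).choose l : ℕ) := by
      exact_mod_cast Nat.choose_pos (by omega)
    have hf1 : (0:ℝ) < (i.factorial : ℝ) := by positivity
    have hf2 : (0:ℝ) < (l.factorial : ℝ) := by positivity
    have h2 : (0:ℝ) < (dd ⟨n-1, by omega⟩)⁻¹ := inv_pos.mpr (hddpos _)
    apply mul_pos _ h2
    apply mul_pos (mul_pos (mul_pos (mul_pos (mul_pos hf1 c1) c2) c3) c4) hf2
end

section
/- Let A₀ be the n×n nilpotent Jordan block (with ones on the superdiagonal and zeros elsewhere), B₀ = e_n the n-th standard basis vector, and F^{-1} = ∫₀¹ (1−t) e^{−A₀ t} B₀ B₀* e^{−A₀* t} dt. Then (F^{-1})_{m,j} = (−1)^{m+j} / ((n−m)!(n−j)!(2n−m−j+1)(2n−m−j+2)) for all 1 ≤ m,j ≤ n. -/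
open Matrix

-- powers of the Jordan block
lemma pow_entry {n : ℕ} (A₀ : Matrix (Fin n) (Fin n) ℝ)
    (hA₀ : ∀ i j : Fin n, A₀ i j = if (j.1 : ℕ) = i.1 + 1 then 1 else 0) :
    ∀ k : ℕ, ∀ i j : Fin n, (A₀ ^ k) i j = if j.1 = i.1 + k then 1 else 0 := by
  intro k
  induction k with
  | zero => intro i j; simp [Matrix.one_apply, Fin.ext_iff, eq_comm]
  | succ k ih =>
    intro i j
    rw [pow_succ, Matrix.mul_apply]
    by_cases h : j.1 = i.1 + (k + 1)
    · have hik : i.1 + k < n := by omega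
      rw [Finset.sum_eq_single (⟨i.1 + k, hik⟩ : Fin n)]
      · rw [ih, hA₀]; simp only [h]; norm_num; omega
      · intro b _ hb
        rw [ih]
        have : ¬ (b.1 = i.1 + k) := fun hb' => hb (Fin.ext hb')
        simp [this]
      · simp
    · rw [if_neg h]
      apply Finset.sum_eq_zero
      intro b _
      rw [ih, hA₀]
      by_cases hb : b.1 = i.1 + k
      · have : ¬ (j.1 = b.1 + 1) := by omega
        simp [this]
      · simp [hb]

lemma exp_entry {n : ℕ} (A₀ : Matrix (Fin n) (Fin n) ℝ)
    (hA₀ : ∀ i j : Fin n, A₀ i j = if (j.1 : ℕ) = i.1 + 1 then 1 else 0)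
    (t : ℝ) (i j : Fin n) (hij : i.1 ≤ j.1) :
    NormedSpace.exp (-(t • A₀)) i j =
      (-t) ^ (j.1 - i.1) / (Nat.factorial (j.1 - i.1) : ℝ) := by
  have hpow := pow_entry A₀ hA₀
  have hM : -(t • A₀) = (-t) • A₀ := by rw [neg_smul]
  have hA0n : A₀ ^ n = 0 := by
    ext a b
    rw [hpow n a b]
    have : ¬ (b.1 = a.1 + n) := by omega
    simp [this]
  have hzero : ∀ k ∉ Finset.range n, ((k.factorial : ℝ)⁻¹) • (-(t • A₀)) ^ k = 0 := by
    intro k hk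
    rw [Finset.mem_range, not_lt] at hk
    have hk0 : A₀ ^ k = 0 := by
      rw [show k = n + (k - n) by omega, pow_add, hA0n, zero_mul]
    rw [hM, smul_pow, hk0, smul_zero, smul_zero]
  have hexp : NormedSpace.exp (-(t • A₀)) =
      ∑ k ∈ Finset.range n, ((k.factorial : ℝ)⁻¹) • (-(t • A₀)) ^ k := by
    rw [NormedSpace.exp_eq_tsum ℝ]
    exact tsum_eq_sum hzero
  rw [hexp]
  have hkey : ∀ k : ℕ, (((k.factorial : ℝ)⁻¹) • (-(t • A₀)) ^ k) i j =
      ((k.factorial : ℝ)⁻¹) * ((-t) ^ k * (if j.1 = i.1 + k then 1 else 0)) := by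
    intro k
    rw [hM, smul_pow]
    simp [Matrix.smul_apply, hpow k i j, smul_eq_mul]
  rw [Matrix.sum_apply]
  rw [Finset.sum_congr rfl (fun k _ => hkey k)]
  rw [Finset.sum_eq_single_of_mem (j.1 - i.1) (Finset.mem_range.2 (by omega))]
  · have : j.1 = i.1 + (j.1 - i.1) := by omega
    simp [← this, div_eq_mul_inv, mul_comm]
  · intro k _ hk
    have : ¬ (j.1 = i.1 + k) := by omega
    simp [this]

theorem stmt_9 (n : ℕ) (hn : 1 ≤ n)
    (A₀ : Matrix (Fin n) (Fin n) ℝ)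
    (hA₀ : ∀ i j : Fin n, A₀ i j = if (j.1 : ℕ) = i.1 + 1 then 1 else 0)
    (E : Matrix (Fin n) (Fin n) ℝ)
    (hE : ∀ i j : Fin n, E i j = if i.1 = n - 1 ∧ j.1 = n - 1 then 1 else 0) :
    ∀ m j : Fin n,
      (∫ t in (0:ℝ)..1,
        (1 - t) * ((NormedSpace.exp (-(t • A₀)) * E * NormedSpace.exp (-(t • A₀ᵀ))) m j)) =
      (-1 : ℝ) ^ ((m.1 + 1) + (j.1 + 1)) /
        ((Nat.factorial (n - (m.1 + 1)) : ℝ) * (Nat.factorial (n - (j.1 + 1)) : ℝ) *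
          ((2 * n : ℝ) - (m.1 + 1) - (j.1 + 1) + 1) * ((2 * n : ℝ) - (m.1 + 1) - (j.1 + 1) + 2)) := by
  intro m j
  set l : Fin n := ⟨n - 1, by omega⟩ with hl
  set a := n - (m.1 + 1) with ha
  set b := n - (j.1 + 1) with hb
  -- entry of the product
  have hprod : ∀ t : ℝ,
      (NormedSpace.exp (-(t • A₀)) * E * NormedSpace.exp (-(t • A₀ᵀ))) m j =
      ((-t) ^ a / (a.factorial : ℝ)) * ((-t) ^ b / (b.factorial : ℝ)) := by
    intro t
    have hT : -(t • A₀ᵀ) = (-(t • A₀))ᵀ := by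
      rw [Matrix.transpose_neg, Matrix.transpose_smul]
    rw [hT, Matrix.exp_transpose]
    set X := NormedSpace.exp (-(t • A₀)) with hX
    have hmul : (X * E * Xᵀ) m j = X m l * Xᵀ l j := by
      rw [Matrix.mul_apply]
      rw [Finset.sum_eq_single l]
      · congr 1
        rw [Matrix.mul_apply, Finset.sum_eq_single l]
        · rw [hE]; simp [hl]
        · intro c _ hc
          have hcl : ¬ (c.1 = n - 1) := fun h => hc (Fin.ext (by simp [hl, h]))
          rw [hE]
          simp [hcl]
        · simp
      · intro c _ hc
        have hcl : ¬ (c.1 = n - 1) := fun h => hc (Fin.ext (by simp [hl, h]))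
        rw [Matrix.mul_apply]
        have hz : ∀ d : Fin n, X m d * E d c = 0 := by
          intro d
          rw [hE]
          simp [hcl]
        rw [Finset.sum_congr rfl (fun d _ => hz d)]
        simp
      · simp
    rw [hmul]
    rw [show Xᵀ l j = X j l from rfl, hX,
      exp_entry A₀ hA₀ t m l (by simp [hl]; omega),
      exp_entry A₀ hA₀ t j l (by simp [hl]; omega)]
    have h1 : l.1 - m.1 = a := by simp [hl, ha]; omega
    have h2 : l.1 - j.1 = b := by simp [hl, hb]; omega
    rw [h1, h2]
  -- rewrite the integrand
  have hint : ∀ t : ℝ, (1 - t) *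
      ((NormedSpace.exp (-(t • A₀)) * E * NormedSpace.exp (-(t • A₀ᵀ))) m j) =
      ((-1 : ℝ) ^ (a + b) / ((a.factorial : ℝ) * (b.factorial : ℝ))) *
        (t ^ (a + b) - t ^ (a + b + 1)) := by
    intro t
    rw [hprod t]
    rw [show (-t) = (-1) * t by ring]
    rw [mul_pow, mul_pow, pow_add]
    ring
  rw [intervalIntegral.integral_congr (fun t _ => hint t)]
  rw [intervalIntegral.integral_const_mul]
  rw [intervalIntegral.integral_sub (intervalIntegral.intervalIntegrable_pow _)
    (intervalIntegral.intervalIntegrable_pow _)]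
  rw [integral_pow, integral_pow]
  -- arithmetic
  have hm : m.1 + 1 ≤ n := m.2
  have hj : j.1 + 1 ≤ n := j.2
  have haR : (a : ℝ) = (n : ℝ) - (m.1 + 1) := by
    rw [ha]; push_cast [Nat.cast_sub hm]; ring
  have hbR : (b : ℝ) = (n : ℝ) - (j.1 + 1) := by
    rw [hb]; push_cast [Nat.cast_sub hj]; ring
  have hsign : (-1 : ℝ) ^ (a + b) = (-1 : ℝ) ^ ((m.1 + 1) + (j.1 + 1)) := by
    have hpar : (a + b) % 2 = ((m.1 + 1) + (j.1 + 1)) % 2 := by omega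
    rw [neg_one_pow_eq_pow_mod_two, hpar, ← neg_one_pow_eq_pow_mod_two]
  have hfa : (a.factorial : ℝ) ≠ 0 := Nat.cast_ne_zero.2 a.factorial_ne_zero
  have hfb : (b.factorial : ℝ) ≠ 0 := Nat.cast_ne_zero.2 b.factorial_ne_zero
  have hs1 : ((a + b : ℕ) : ℝ) + 1 ≠ 0 := by positivity
  have hs2 : ((a + b + 1 : ℕ) : ℝ) + 1 ≠ 0 := by positivity
  have hR1 : (2 * n : ℝ) - (m.1 + 1) - (j.1 + 1) + 1 = ((a + b : ℕ) : ℝ) + 1 := by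
    push_cast [haR, hbR]; ring
  have hR2 : (2 * n : ℝ) - (m.1 + 1) - (j.1 + 1) + 2 = ((a + b + 1 : ℕ) : ℝ) + 1 := by
    push_cast [haR, hbR]; ring
  rw [hR1, hR2, ← hsign]
  push_cast
  field_simp
  ring
end

section
/- Let F = [[36,12],[12,6]] and consider for x = (x₁,x₂) ≠ 0 and a₀ > 0 the equation 2a₀Θ⁴ = 36x₁² + 24Θx₁x₂ + 6Θ²x₂². This equation has a unique positive solution Θ(x), and the right-hand side is positive for all Θ > 0 (i.e., 36x₁² + 24Θx₁x₂ + 6Θ²x₂² > 0 whenever (x₁,x₂) ≠ (0,0) and Θ > 0). -/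
/-!
Substitute `u = Θ⁻¹`: for `Θ > 0` the equation becomes `g(u) = 2a₀` with
`g(u) = 36x₁²u⁴ + 24x₁x₂u³ + 6x₂²u²`. Now `g(0) = 0 < 2a₀`, `g(u) → ∞`, and
`g'(u) = 12u((x₂ + 3x₁u)² + 3x₁²u²) > 0` for `u > 0`, so `g` takes the value `2a₀` at exactly
one positive `u`. Positivity of the right-hand side is the sum of squares
`6(2x₁ + Θx₂)² + 12x₁²`.
-/

open Set Filter

/-- `Θ⁻⁴ (36x₁² + 24Θx₁x₂ + 6Θ²x₂²)` written as a function of `u = Θ⁻¹`. -/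
def controlPoly (x₁ x₂ u : ℝ) : ℝ :=
  36 * x₁ ^ 2 * u ^ 4 + 24 * x₁ * x₂ * u ^ 3 + 6 * x₂ ^ 2 * u ^ 2

section

variable {x₁ x₂ : ℝ}

lemma ne_zero_or_ne_zero_of_prod_ne_zero (hx : (x₁, x₂) ≠ (0, 0)) : x₁ ≠ 0 ∨ x₂ ≠ 0 := by
  contrapose! hx
  simp [hx.1, hx.2]

lemma quadraticForm_pos (hx : (x₁, x₂) ≠ (0, 0)) {Θ : ℝ} (hΘ : Θ ≠ 0) :
    0 < 36 * x₁ ^ 2 + 24 * Θ * x₁ * x₂ + 6 * Θ ^ 2 * x₂ ^ 2 := by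
  have hsos : 36 * x₁ ^ 2 + 24 * Θ * x₁ * x₂ + 6 * Θ ^ 2 * x₂ ^ 2
      = 6 * (2 * x₁ + Θ * x₂) ^ 2 + 12 * x₁ ^ 2 := by ring
  rw [hsos]
  by_cases h₁ : x₁ = 0
  · have h₂ : x₂ ≠ 0 := (ne_zero_or_ne_zero_of_prod_ne_zero hx).resolve_left (not_not.2 h₁)
    rw [h₁]
    ring_nf
    positivity
  · positivity

lemma controlPoly_inv (x₁ x₂ : ℝ) {Θ : ℝ} (hΘ : Θ ≠ 0) :
    controlPoly x₁ x₂ Θ⁻¹ = (36 * x₁ ^ 2 + 24 * Θ * x₁ * x₂ + 6 * Θ ^ 2 * x₂ ^ 2) / Θ ^ 4 := by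
  unfold controlPoly
  field_simp

lemma hasDerivAt_controlPoly (x₁ x₂ u : ℝ) :
    HasDerivAt (controlPoly x₁ x₂) (12 * u * ((x₂ + 3 * x₁ * u) ^ 2 + 3 * (x₁ * u) ^ 2)) u := by
  have := (((hasDerivAt_pow 4 u).const_mul (36 * x₁ ^ 2)).add
    ((hasDerivAt_pow 3 u).const_mul (24 * x₁ * x₂))).add
    ((hasDerivAt_pow 2 u).const_mul (6 * x₂ ^ 2))
  exact this.congr_deriv (by norm_num; ring)

lemma controlPoly_strictMonoOn (hx : (x₁, x₂) ≠ (0, 0)) :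
    StrictMonoOn (controlPoly x₁ x₂) (Ici 0) := by
  refine strictMonoOn_of_hasDerivWithinAt_pos (convex_Ici 0)
    (by unfold controlPoly; fun_prop)
    (fun u _ => (hasDerivAt_controlPoly x₁ x₂ u).hasDerivWithinAt) fun u hu => ?_
  rw [interior_Ici] at hu
  have hu : 0 < u := hu
  have hsum : 0 < (x₂ + 3 * x₁ * u) ^ 2 + 3 * (x₁ * u) ^ 2 := by
    by_cases h₁ : x₁ = 0
    · have h₂ : x₂ ≠ 0 := (ne_zero_or_ne_zero_of_prod_ne_zero hx).resolve_left (not_not.2 h₁)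
      rw [h₁]
      ring_nf
      positivity
    · positivity
  positivity

lemma tendsto_controlPoly_atTop (hx : (x₁, x₂) ≠ (0, 0)) :
    Tendsto (controlPoly x₁ x₂) atTop atTop := by
  have hc : 0 < 3 / 2 * (x₁ ^ 2 + x₂ ^ 2) := by
    rcases ne_zero_or_ne_zero_of_prod_ne_zero hx with h | h <;> positivity
  refine tendsto_atTop_mono' _ ?_ ((tendsto_pow_atTop two_ne_zero).const_mul_atTop hc)
  filter_upwards [eventually_ge_atTop 1] with u hu
  have hsos : controlPoly x₁ x₂ u - 3 / 2 * (x₁ ^ 2 * u ^ 2 + x₂ ^ 2) * u ^ 2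
      = (9 / 2 * (x₂ + 8 / 3 * x₁ * u) ^ 2 + 5 / 2 * (x₁ * u) ^ 2) * u ^ 2 := by
    unfold controlPoly; ring
  calc 3 / 2 * (x₁ ^ 2 + x₂ ^ 2) * u ^ 2
      ≤ 3 / 2 * (x₁ ^ 2 * u ^ 2 + x₂ ^ 2) * u ^ 2 := by
        gcongr
        exact le_mul_of_one_le_right (sq_nonneg _) (one_le_pow₀ hu)
    _ ≤ controlPoly x₁ x₂ u := by
        rw [← sub_nonneg, hsos]
        positivity

end

lemma existsUnique_pos_eq_of_strictMonoOn {f : ℝ → ℝ} (hf : Continuous f)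
    (hmono : StrictMonoOn f (Ici 0)) (htop : Tendsto f atTop atTop) {y : ℝ} (hy : f 0 < y) :
    ∃! u, 0 < u ∧ f u = y := by
  obtain ⟨u, hu, rfl⟩ := intermediate_value_Ioi hf.continuousOn htop hy
  refine ⟨u, ⟨hu, rfl⟩, fun v ⟨hv, hfv⟩ => ?_⟩
  exact hmono.injOn (mem_Ici_of_Ioi hv) (mem_Ici_of_Ioi hu) hfv

theorem stmt_19 (a₀ x₁ x₂ : ℝ) (ha₀ : 0 < a₀) (hx : (x₁, x₂) ≠ (0, 0)) :
    (∃! Θ : ℝ, 0 < Θ ∧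
      2 * a₀ * Θ ^ 4 = 36 * x₁ ^ 2 + 24 * Θ * x₁ * x₂ + 6 * Θ ^ 2 * x₂ ^ 2) ∧
    ∀ Θ : ℝ, 0 < Θ → 0 < 36 * x₁ ^ 2 + 24 * Θ * x₁ * x₂ + 6 * Θ ^ 2 * x₂ ^ 2 := by
  have hequiv : ∀ Θ : ℝ, 0 < Θ →
      (2 * a₀ * Θ ^ 4 = 36 * x₁ ^ 2 + 24 * Θ * x₁ * x₂ + 6 * Θ ^ 2 * x₂ ^ 2 ↔
        controlPoly x₁ x₂ Θ⁻¹ = 2 * a₀) := fun Θ hΘ => by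
    rw [controlPoly_inv x₁ x₂ hΘ.ne', div_eq_iff (by positivity), eq_comm]
  obtain ⟨u, ⟨hu, hsol⟩, huniq⟩ := existsUnique_pos_eq_of_strictMonoOn
    (by unfold controlPoly; fun_prop) (controlPoly_strictMonoOn hx)
    (tendsto_controlPoly_atTop hx) (y := 2 * a₀) (by norm_num [controlPoly, ha₀])
  refine ⟨⟨u⁻¹, ⟨inv_pos.2 hu, (hequiv _ (inv_pos.2 hu)).2 (by rwa [inv_inv])⟩, ?_⟩,
    fun Θ hΘ => quadraticForm_pos hx hΘ.ne'⟩
  rintro Θ ⟨hΘ, hΘsol⟩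
  rw [← huniq Θ⁻¹ ⟨inv_pos.2 hΘ, (hequiv Θ hΘ).1 hΘsol⟩, inv_inv]
end
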